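/- arXiv:2009.13391 — 3 statements merged into one kernel-verified Lean document; each statement's English description precedes it below -/
import Mathlib

section
/- Let X be a normed linear space, Y a Banach space, and T : X → Y a bounded linear map. Suppose that for every ε > 0 there exist a Banach space Z_ε and a compact linear map K_ε : X → Z_ε such that ‖Tx‖_Y ≤ ε‖x‖_X + ‖K_ε x‖_{Z_ε} for all x ∈ X. Then T is compact. -/
/-!
Fix `ε > 0` and take `K` from the estimate for `ε / 4`. By linearity the estimate bounds
`dist (T x) (T x')` by `ε / 4 * dist x x' + dist (K x) (K x')`, so on the unit ball `T` moves
points at most `ε / 2` further apart than `K` does. As `K` is compact, `K '' ball 0 1` is totally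
bounded; pulling back a finite `ε / 2`-net of it to the ball gives a finite `ε`-net of
`T '' ball 0 1`. Hence that image is totally bounded, and its closure is compact because `Y` is
complete.
-/

open Metric Set

lemma exists_finite_cover_image_of_dist_le_add_dist {α β γ : Type*} [PseudoMetricSpace β]
    [PseudoMetricSpace γ] {f : α → β} {g : α → γ} {s : Set α} {δ η : ℝ}
    (hg : TotallyBounded (g '' s)) (hη : 0 < η)
    (hfg : ∀ a ∈ s, ∀ b ∈ s, dist (f a) (f b) ≤ δ + dist (g a) (g b)) :
    ∃ t : Set β, t.Finite ∧ f '' s ⊆ ⋃ y ∈ t, ball y (δ + η) := by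
  obtain ⟨u, hus, huf, hcover⟩ :=
    exists_subset_image_finite_and.1 (finite_approx_of_totallyBounded hg η hη)
  refine ⟨f '' u, huf.image f, ?_⟩
  rintro _ ⟨a, ha, rfl⟩
  obtain ⟨_, ⟨b, hb, rfl⟩, hab⟩ := mem_iUnion₂.1 (hcover (mem_image_of_mem g ha))
  refine mem_iUnion₂.2 ⟨f b, mem_image_of_mem f hb, ?_⟩
  rw [mem_ball] at hab ⊢
  linarith [hfg a ha b (hus hb)]

lemma dist_apply_le_mul_dist_add_dist_apply {X Y Z F G : Type*} [SeminormedAddCommGroup X]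
    [SeminormedAddCommGroup Y] [SeminormedAddCommGroup Z] [FunLike F X Y]
    [AddMonoidHomClass F X Y] [FunLike G X Z] [AddMonoidHomClass G X Z] {T : F} {K : G} {ε : ℝ}
    (hTK : ∀ x, ‖T x‖ ≤ ε * ‖x‖ + ‖K x‖) (x x' : X) :
    dist (T x) (T x') ≤ ε * dist x x' + dist (K x) (K x') := by
  simpa only [dist_eq_norm, map_sub] using hTK (x - x')

/-- Compactness estimates (with ε-dependent auxiliary Banach spaces and compact maps)
imply compactness of a bounded linear operator. -/
theorem compact_of_compactness_estimates
    {X Y : Type*} [NormedAddCommGroup X] [NormedSpace ℝ X]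
    [NormedAddCommGroup Y] [NormedSpace ℝ Y] [CompleteSpace Y]
    (T : X →L[ℝ] Y)
    (h : ∀ ε : ℝ, 0 < ε →
      ∃ (Z : Type) (_ : NormedAddCommGroup Z) (_ : NormedSpace ℝ Z) (_ : CompleteSpace Z)
        (K : X →L[ℝ] Z), IsCompactOperator K ∧
          ∀ x : X, ‖T x‖ ≤ ε * ‖x‖ + ‖K x‖) :
    IsCompactOperator T := by
  refine (isCompactOperator_iff_isCompact_closure_image_ball (f := (T : X →ₗ[ℝ] Y)) one_pos).2 ?_
  refine (totallyBounded_closure.2 ?_).isCompact_of_isClosed isClosed_closure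
  refine totallyBounded_iff.2 fun ε hε => ?_
  obtain ⟨Z, _, _, _, K, hK, hTK⟩ := h (ε / 4) (by positivity)
  have hKball : TotallyBounded (K '' ball 0 1) :=
    (hK.isCompact_closure_image_ball (f := (K : X →ₗ[ℝ] Z)) 1).totallyBounded.subset
      subset_closure
  have hTball : ∀ x ∈ ball (0 : X) 1, ∀ x' ∈ ball (0 : X) 1,
      dist (T x) (T x') ≤ ε / 2 + dist (K x) (K x') := fun x hx x' hx' => by
    have hxx' : dist x x' < 2 := by
      linarith [dist_triangle_right x x' 0, mem_ball.1 hx, mem_ball.1 hx']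
    calc dist (T x) (T x') ≤ ε / 4 * dist x x' + dist (K x) (K x') :=
          dist_apply_le_mul_dist_add_dist_apply hTK x x'
      _ ≤ ε / 2 + dist (K x) (K x') := by nlinarith
  simpa only [add_halves, ContinuousLinearMap.coe_coe] using
    exists_finite_cover_image_of_dist_le_add_dist hKball (half_pos hε) hTball
end

section
/- Let φ(z) = exp(−1/(1−|z|)) on the unit disc 𝔻. For real s ≥ 0, as t → ∞, ∫_𝔻 |z|^t (1−|z|²)^{2s} φ(z) dA(z) ∼ (t+1)^{(−4s−3)/4} exp(−2√(t+1)), i.e. the ratio of the two sides tends to a positive constant. -/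
/-!
In polar coordinates the integral is `2π ∫₀¹ r^{t+1} (1 - r²)^{2s} e^{-1/(1-r)} dr`, whose
integrand peaks where `1 - r ≈ (t+1)^{-1/2}`. With `σ = (t+1)^{1/4}` substitute
`1 - r = (σ + w)/σ³`: after the normalisation `σ⁻³ (t+1)^{-s} e^{-2σ²}`, which is exactly the
comparison function of the theorem, the rescaled integrand tends pointwise to `4^s e^{-1/2 - w²}`
(expand `log (1 - u)` to second order), and it is dominated uniformly in large `σ` by an
integrable function. Dominated convergence gives the limit `2π · 4^s e^{-1/2} √π`.
-/

open MeasureTheory Real Filter Set Topology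

theorem integral_unitDisc_fun_norm (f : ℝ → ℝ) :
    ∫ z in {z : ℂ | ‖z‖ < 1}, f ‖z‖ = 2 * π * ∫ r in Ioo 0 1, r * f r := by
  have hind : ∀ z : ℂ,
      {z : ℂ | ‖z‖ < 1}.indicator (fun z => f ‖z‖) z = (Iio 1).indicator f ‖z‖ :=
    fun z => indicator_comp_right (f := (‖·‖)) (g := f) (s := Iio 1) (x := z)
  have hball : volume.real (Metric.ball (0 : ℂ) 1) = π := by
    simp [measureReal_def, Complex.volume_ball]
  rw [← integral_indicator (measurableSet_lt measurable_norm measurable_const)]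
  simp_rw [hind]
  rw [integral_fun_norm_addHaar volume, Complex.finrank_real_complex, hball, ← Ioi_inter_Iio,
    ← setIntegral_indicator measurableSet_Iio]
  simp only [Nat.add_one_sub_one, pow_one, smul_eq_mul, nsmul_eq_mul, Nat.cast_ofNat]
  rw [mul_assoc]
  congr 2
  refine setIntegral_congr_fun measurableSet_Ioi fun r _ => ?_
  by_cases hr : r ∈ Iio 1 <;> simp [hr]

theorem setIntegral_Ioo_zero_one_comp_affine (g : ℝ → ℝ) {σ : ℝ} (hσ : 0 < σ) :
    ∫ r in Ioo 0 1, g r =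
      (σ ^ 3)⁻¹ * ∫ w in Ioo (-σ) (σ ^ 3 - σ), g (1 - (σ + w) / σ ^ 3) := by
  have hσ3 : 0 < σ ^ 3 := by positivity
  rw [← integral_Ioc_eq_integral_Ioo, ← integral_Ioc_eq_integral_Ioo,
    ← intervalIntegral.integral_of_le zero_le_one,
    ← intervalIntegral.integral_of_le (by linarith : -σ ≤ σ ^ 3 - σ)]
  have hsub := intervalIntegral.integral_comp_sub_div g hσ3.ne' (1 - (σ ^ 2)⁻¹)
    (a := -σ) (b := σ ^ 3 - σ)
  have h0 : 1 - (σ ^ 2)⁻¹ - (σ ^ 3 - σ) / σ ^ 3 = 0 := by field_simp; ring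
  have h1 : 1 - (σ ^ 2)⁻¹ - -σ / σ ^ 3 = 1 := by field_simp; ring
  rw [h0, h1, smul_eq_mul] at hsub
  rw [eq_inv_mul_iff_mul_eq₀ hσ3.ne', ← hsub]
  congr 1
  ext w
  congr 1
  field_simp
  ring

theorem one_add_abs_rpow_le_exp {a : ℝ} (ha : 0 ≤ a) (w : ℝ) :
    (1 + |w|) ^ a ≤ exp (a * |w|) := by
  calc (1 + |w|) ^ a ≤ exp |w| ^ a := by
        gcongr
        linarith [add_one_le_exp |w|]
    _ = exp (a * |w|) := by rw [← exp_mul, mul_comm]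

theorem tendsto_mul_log_one_sub_add_add {α : Type*} {l : Filter α} {a u : α → ℝ}
    (hu : Tendsto u l (𝓝 0)) (hau : Tendsto (fun x => a x * u x ^ 3) l (𝓝 0)) :
    Tendsto (fun x => a x * (log (1 - u x) + u x + u x ^ 2 / 2)) l (𝓝 0) := by
  refine squeeze_zero_norm' ?_ (by simpa using hau.norm.const_mul 2)
  filter_upwards [hu.norm.eventually (gt_mem_nhds (by norm_num : ‖(0 : ℝ)‖ < 1 / 2))] with x hx
  rw [Real.norm_eq_abs] at hx
  have htaylor := abs_log_sub_add_sum_range_le (by linarith : |u x| < 1) 2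
  norm_num [Finset.sum_range_succ] at htaylor
  rw [norm_mul, Real.norm_eq_abs, Real.norm_eq_abs]
  calc |a x| * |log (1 - u x) + u x + u x ^ 2 / 2| ≤ |a x| * (|u x| ^ 3 / (1 - |u x|)) := by
        rw [add_assoc, add_comm (log _)]
        gcongr
    _ ≤ |a x| * (|u x| ^ 3 / (1 / 2)) := by gcongr; linarith
    _ = 2 * (|a x| * |u x| ^ 3) := by ring

namespace WeightedIntegral

/-- The integrand `r^{t+1} (1 - r²)^{2s} e^{-1/(1-r)}` after the substitution
`r = 1 - (σ + w)/σ³` with `σ⁴ = t + 1`, multiplied by `(t+1)^s e^{2σ²}`. -/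
noncomputable def kernel (s σ w : ℝ) : ℝ :=
  indicator (Ioo (-σ) (σ ^ 3 - σ))
    (fun w => (1 - (σ + w) / σ ^ 3) ^ (σ ^ 4) *
      (((σ + w) / σ ^ 3 * (2 - (σ + w) / σ ^ 3)) ^ 2 * σ ^ 4) ^ s *
      exp (2 * σ ^ 2 - σ ^ 3 / (σ + w))) w

/-- The two terms dominate `kernel` for `w ≤ σ` and for `w > σ` respectively. -/
noncomputable def kernelMajorant (s w : ℝ) : ℝ :=
  4 ^ s * ((1 + |w|) ^ (2 * s) * exp (-(w ^ 2 / 2)) + exp (-(2 * |w|)))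

theorem add_div_pow_three_mem_Ioo {σ w : ℝ} (hσ : 0 < σ) (hw : w ∈ Ioo (-σ) (σ ^ 3 - σ)) :
    (σ + w) / σ ^ 3 ∈ Ioo 0 1 := by
  obtain ⟨hw₁, hw₂⟩ := hw
  have : 0 < σ + w := by linarith
  exact ⟨by positivity, (div_lt_one (by positivity)).2 (by linarith)⟩

theorem kernel_exponent_eq {σ w : ℝ} (hσ : σ ≠ 0) (hσw : σ + w ≠ 0) :
    σ ^ 4 * ((σ + w) / σ ^ 3) + σ ^ 3 / (σ + w) - 2 * σ ^ 2 = σ * w ^ 2 / (σ + w) := by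
  field_simp
  ring

theorem mul_weight_eq_kernel (s : ℝ) {t σ w : ℝ} (hσ : 0 < σ) (hσt : σ ^ 4 = t + 1)
    (hw : w ∈ Ioo (-σ) (σ ^ 3 - σ)) :
    let r := 1 - (σ + w) / σ ^ 3
    r * (r ^ t * (1 - r ^ 2) ^ (2 * s) * exp (-1 / (1 - r))) =
      ((t + 1) ^ s * exp (2 * σ ^ 2))⁻¹ * kernel s σ w := by
  intro r
  obtain ⟨hu₀, hu₁⟩ := add_div_pow_three_mem_Ioo hσ hw
  set u := (σ + w) / σ ^ 3 with hu
  have hr : 0 < r := by simp only [r]; linarith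
  have hpow : r * r ^ t = r ^ (σ ^ 4) := by rw [hσt, rpow_add_one hr.ne', mul_comm]
  have hsq : 1 - r ^ 2 = u * (2 - u) := by simp only [r]; ring
  have hmid : ((u * (2 - u)) ^ 2 * σ ^ 4) ^ s = (u * (2 - u)) ^ (2 * s) * (t + 1) ^ s := by
    rw [mul_rpow (by positivity) (by positivity), hσt, rpow_mul (by nlinarith), ← rpow_natCast]
    norm_num
  have hexp : -1 / (1 - r) = -(σ ^ 3 / (σ + w)) := by
    simp only [r, sub_sub_cancel, neg_div, one_div_div]
  rw [kernel, indicator_of_mem hw, ← hu, hmid, sub_eq_add_neg _ (σ ^ 3 / (σ + w)), exp_add,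
    ← hexp, ← hsq, ← hpow]
  have : 0 < (t + 1) ^ s := by rw [← hσt]; positivity
  field_simp

theorem integral_div_eq_integral_kernel (s : ℝ) {t : ℝ} (ht : -1 < t) :
    (∫ z in {z : ℂ | ‖z‖ < 1}, ‖z‖ ^ t * (1 - ‖z‖ ^ 2) ^ (2 * s) * exp (-1 / (1 - ‖z‖))) /
        ((t + 1) ^ ((-4 * s - 3) / 4) * exp (-2 * √(t + 1))) =
      2 * π * ∫ w, kernel s ((t + 1) ^ (1 / 4 : ℝ)) w := by
  have ht₁ : 0 < t + 1 := by linarith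
  set σ := (t + 1) ^ (1 / 4 : ℝ) with hσ
  have hσ₀ : 0 < σ := by positivity
  have hσpow : ∀ n : ℕ, σ ^ n = (t + 1) ^ (n / 4 : ℝ) := fun n => by
    rw [hσ, ← rpow_natCast, ← rpow_mul ht₁.le]; ring_nf
  have hσ4 : σ ^ 4 = t + 1 := by rw [hσpow]; norm_num
  have hden : (t + 1) ^ ((-4 * s - 3) / 4) * exp (-2 * √(t + 1)) =
      (σ ^ 3)⁻¹ * ((t + 1) ^ s * exp (2 * σ ^ 2))⁻¹ := by
    rw [show (-4 * s - 3) / 4 = -s + -(3 / 4) by ring, rpow_add ht₁, rpow_neg ht₁.le,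
      rpow_neg ht₁.le, sqrt_eq_rpow, hσpow, hσpow, neg_mul, exp_neg]
    norm_num
    ring
  rw [integral_unitDisc_fun_norm (fun r => r ^ t * (1 - r ^ 2) ^ (2 * s) * exp (-1 / (1 - r))),
    setIntegral_Ioo_zero_one_comp_affine _ hσ₀,
    setIntegral_congr_fun measurableSet_Ioo fun w hw => mul_weight_eq_kernel s hσ₀ hσ4 hw,
    integral_const_mul, hden,
    setIntegral_eq_integral_of_forall_compl_eq_zero (f := kernel s σ) fun w hw =>
      indicator_of_notMem hw _]
  have : 0 < (t + 1) ^ s := by positivity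
  field_simp

theorem kernel_le_of_mem {s σ w : ℝ} (hs : 0 ≤ s) (hσ : 1 ≤ σ)
    (hw : w ∈ Ioo (-σ) (σ ^ 3 - σ)) :
    kernel s σ w ≤ 4 ^ s * (1 + |w|) ^ (2 * s) * exp (-(σ * w ^ 2 / (σ + w))) := by
  have hσ₀ : 0 < σ := by linarith
  have hσw : 0 < σ + w := by linarith [hw.1]
  obtain ⟨hu₀, hu₁⟩ := add_div_pow_three_mem_Ioo hσ₀ hw
  set u := (σ + w) / σ ^ 3 with hu
  have hpow : (1 - u) ^ (σ ^ 4) ≤ exp (-(σ ^ 4 * u)) := by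
    calc (1 - u) ^ (σ ^ 4) ≤ exp (-u) ^ (σ ^ 4) :=
          rpow_le_rpow (by linarith) (one_sub_le_exp_neg u) (by positivity)
      _ = exp (-(σ ^ 4 * u)) := by rw [← exp_mul]; ring_nf
  have hratio : u * σ ^ 2 = (σ + w) / σ := by rw [hu]; field_simp
  have hratio_le : (σ + w) / σ ≤ 1 + |w| := by
    rw [div_le_iff₀ hσ₀]; nlinarith [le_abs_self w, abs_nonneg w]
  have hmid : ((u * (2 - u)) ^ 2 * σ ^ 4) ^ s ≤ 4 ^ s * (1 + |w|) ^ (2 * s) := by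
    calc ((u * (2 - u)) ^ 2 * σ ^ 4) ^ s = (((σ + w) / σ) ^ 2 * (2 - u) ^ 2) ^ s := by
          rw [← hratio]; ring_nf
      _ ≤ ((1 + |w|) ^ 2 * 4) ^ s := by
          gcongr
          nlinarith
      _ = 4 ^ s * (1 + |w|) ^ (2 * s) := by
          rw [mul_rpow (by positivity) (by norm_num), mul_comm, rpow_mul (by positivity)]
          norm_cast
  rw [kernel, indicator_of_mem hw, ← hu]
  calc (1 - u) ^ (σ ^ 4) * ((u * (2 - u)) ^ 2 * σ ^ 4) ^ s * exp (2 * σ ^ 2 - σ ^ 3 / (σ + w))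
      ≤ exp (-(σ ^ 4 * u)) * (4 ^ s * (1 + |w|) ^ (2 * s)) *
          exp (2 * σ ^ 2 - σ ^ 3 / (σ + w)) := by
        gcongr
    _ = 4 ^ s * (1 + |w|) ^ (2 * s) * exp (-(σ * w ^ 2 / (σ + w))) := by
        rw [← kernel_exponent_eq hσ₀.ne' hσw.ne', mul_comm (exp _), mul_assoc, ← exp_add, ← hu]
        ring_nf

theorem rpow_mul_exp_le_kernelMajorant {s σ w : ℝ} (hs : 0 ≤ s) (hσ : 4 * s + 4 ≤ σ)
    (hσw : 0 < σ + w) :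
    4 ^ s * (1 + |w|) ^ (2 * s) * exp (-(σ * w ^ 2 / (σ + w))) ≤ kernelMajorant s w := by
  rw [kernelMajorant, mul_assoc, mul_add]
  rcases le_or_gt w σ with hwσ | hσw'
  · have hgauss : w ^ 2 / 2 ≤ σ * w ^ 2 / (σ + w) := by
      rw [div_le_div_iff₀ two_pos hσw]; nlinarith [sq_nonneg w]
    exact le_add_of_le_of_nonneg (by gcongr) (by positivity)
  · have hw : |w| = w := abs_of_pos (by linarith)
    have hlin : (2 * s + 2) * w ≤ σ * w ^ 2 / (σ + w) := by
      have : (2 * s + 2) * (σ + w) ≤ σ * w := by nlinarith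
      rw [le_div_iff₀ hσw]; nlinarith
    refine le_add_of_nonneg_of_le (by positivity) ?_
    calc 4 ^ s * ((1 + |w|) ^ (2 * s) * exp (-(σ * w ^ 2 / (σ + w))))
        ≤ 4 ^ s * (exp (2 * s * |w|) * exp (-((2 * s + 2) * w))) := by
          gcongr
          exact one_add_abs_rpow_le_exp (by linarith) w
      _ = 4 ^ s * exp (-(2 * |w|)) := by rw [← exp_add, hw]; ring_nf

theorem norm_kernel_le_kernelMajorant {s σ : ℝ} (hs : 0 ≤ s) (hσ : 4 * s + 4 ≤ σ) (w : ℝ) :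
    ‖kernel s σ w‖ ≤ kernelMajorant s w := by
  by_cases hw : w ∈ Ioo (-σ) (σ ^ 3 - σ)
  · have hσw : 0 < σ + w := by linarith [hw.1]
    have hσ₀ : 0 < σ := by linarith
    have hnonneg : 0 ≤ kernel s σ w := by
      rw [kernel, indicator_of_mem hw]
      have : 0 ≤ 1 - (σ + w) / σ ^ 3 := by linarith [(add_div_pow_three_mem_Ioo hσ₀ hw).2]
      positivity
    rw [norm_of_nonneg hnonneg]
    exact (kernel_le_of_mem hs (by linarith) hw).trans
      (rpow_mul_exp_le_kernelMajorant hs hσ hσw)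
  · rw [kernel, indicator_of_notMem hw, norm_zero, kernelMajorant]
    positivity

theorem integrable_kernelMajorant {s : ℝ} (hs : 0 ≤ s) : Integrable (kernelMajorant s) := by
  have hgauss : Integrable fun w : ℝ => exp (4 * s ^ 2) * exp (-(1 / 4) * w ^ 2) :=
    (integrable_exp_neg_mul_sq (by norm_num)).const_mul _
  have hpoly : Integrable fun w : ℝ => (1 + |w|) ^ (2 * s) * exp (-(w ^ 2 / 2)) := by
    refine hgauss.mono' (by fun_prop) (ae_of_all _ fun w => ?_)
    rw [norm_of_nonneg (by positivity)]
    calc (1 + |w|) ^ (2 * s) * exp (-(w ^ 2 / 2))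
        ≤ exp (2 * s * |w|) * exp (-(w ^ 2 / 2)) := by
          gcongr
          exact one_add_abs_rpow_le_exp (by linarith) w
      _ ≤ exp (4 * s ^ 2) * exp (-(1 / 4) * w ^ 2) := by
          rw [← exp_add, ← exp_add, exp_le_exp]
          nlinarith [sq_nonneg (|w| - 4 * s), sq_abs w]
  have hexp : Integrable fun w : ℝ => exp (-(2 * |w|)) := by
    refine integrable_inv_one_add_sq.mono' (by fun_prop) (ae_of_all _ fun w => ?_)
    rw [norm_of_nonneg (by positivity), exp_neg]
    gcongr
    nlinarith [quadratic_le_exp_of_nonneg (by positivity : 0 ≤ 2 * |w|), sq_abs w, abs_nonneg w]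
  exact (hpoly.add hexp).const_mul _

theorem tendsto_kernel (s w : ℝ) :
    Tendsto (fun σ => kernel s σ w) atTop (𝓝 (4 ^ s * exp (-(1 / 2) - w ^ 2))) := by
  have hq : Tendsto (fun σ => (σ + w) / σ) atTop (𝓝 1) := by
    have := (tendsto_const_nhds (x := (1 : ℝ))).add
      ((tendsto_const_nhds (x := w)).div_atTop tendsto_id)
    rw [add_zero] at this
    refine this.congr' ?_
    filter_upwards [eventually_gt_atTop 0] with σ hσ
    rw [id, one_add_div hσ.ne', add_comm]
  have hσ₂ : Tendsto (fun σ : ℝ => (σ ^ 2)⁻¹) atTop (𝓝 0) :=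
    (tendsto_pow_atTop two_ne_zero).inv_tendsto_atTop
  have hu : Tendsto (fun σ => (σ + w) / σ ^ 3) atTop (𝓝 0) := by
    refine (by simpa using hq.mul hσ₂ :
      Tendsto (fun σ => (σ + w) / σ * (σ ^ 2)⁻¹) atTop (𝓝 0)).congr' ?_
    filter_upwards [eventually_gt_atTop 0] with σ hσ
    field_simp
  have hremainder := tendsto_mul_log_one_sub_add_add hu (a := fun σ => σ ^ 4) <| by
    refine (by simpa using (hq.pow 3).mul hσ₂ :
      Tendsto (fun σ => ((σ + w) / σ) ^ 3 * (σ ^ 2)⁻¹) atTop (𝓝 0)).congr' ?_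
    filter_upwards [eventually_gt_atTop 0] with σ hσ
    field_simp
  have hexponent : Tendsto (fun σ =>
      σ ^ 4 * (log (1 - (σ + w) / σ ^ 3) + (σ + w) / σ ^ 3 + ((σ + w) / σ ^ 3) ^ 2 / 2) -
        ((σ + w) / σ) ^ 2 / 2 - w ^ 2 * ((σ + w) / σ)⁻¹) atTop (𝓝 (-(1 / 2) - w ^ 2)) := by
    simpa using (hremainder.sub ((hq.pow 2).div_const 2)).sub
      (tendsto_const_nhds.mul (hq.inv₀ one_ne_zero))
  have hfactor : Tendsto (fun σ => (((σ + w) / σ ^ 3 * (2 - (σ + w) / σ ^ 3)) ^ 2 * σ ^ 4) ^ s)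
      atTop (𝓝 (4 ^ s)) := by
    have : Tendsto (fun σ => ((σ + w) / σ) ^ 2 * (2 - (σ + w) / σ ^ 3) ^ 2) atTop (𝓝 4) := by
      convert (hq.pow 2).mul (((tendsto_const_nhds (x := (2 : ℝ))).sub hu).pow 2) using 2
      norm_num
    refine (this.rpow_const (Or.inl (by norm_num))).congr' ?_
    filter_upwards [eventually_gt_atTop 0] with σ hσ
    congr 1
    field_simp
  rw [mul_comm]
  refine ((continuous_exp.tendsto _).comp hexponent).mul hfactor |>.congr' ?_
  filter_upwards [eventually_ge_atTop (2 + |w|)] with σ hσ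
  have hσ₀ : 0 < σ := by linarith [abs_nonneg w]
  have hw : w ∈ Ioo (-σ) (σ ^ 3 - σ) := by
    have : 4 ≤ σ ^ 2 := by nlinarith [abs_nonneg w]
    have : 4 * σ ≤ σ ^ 3 := by nlinarith
    constructor <;> linarith [neg_abs_le w, le_abs_self w]
  have hσw : 0 < σ + w := by linarith [hw.1]
  have hu₁ := (add_div_pow_three_mem_Ioo hσ₀ hw).2
  have hexp : σ ^ 4 * (log (1 - (σ + w) / σ ^ 3) + (σ + w) / σ ^ 3 + ((σ + w) / σ ^ 3) ^ 2 / 2) -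
      ((σ + w) / σ) ^ 2 / 2 - w ^ 2 * ((σ + w) / σ)⁻¹ =
      log (1 - (σ + w) / σ ^ 3) * σ ^ 4 + (2 * σ ^ 2 - σ ^ 3 / (σ + w)) := by
    field_simp
    ring
  rw [kernel, indicator_of_mem hw, rpow_def_of_pos (x := 1 - (σ + w) / σ ^ 3) (by linarith),
    Function.comp_apply, hexp, exp_add]
  ring

theorem integral_rpow_mul_exp_neg_half_sub_sq (s : ℝ) :
    ∫ w : ℝ, 4 ^ s * exp (-(1 / 2) - w ^ 2) = 4 ^ s * exp (-(1 / 2)) * √π := by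
  simp_rw [sub_eq_add_neg, exp_add, ← mul_assoc, neg_eq_neg_one_mul (_ ^ 2)]
  rw [integral_const_mul, integral_gaussian, div_one]

theorem tendsto_integral_kernel {s : ℝ} (hs : 0 ≤ s) :
    Tendsto (fun σ => ∫ w, kernel s σ w) atTop (𝓝 (4 ^ s * exp (-(1 / 2)) * √π)) := by
  rw [← integral_rpow_mul_exp_neg_half_sub_sq]
  refine tendsto_integral_filter_of_dominated_convergence (kernelMajorant s)
    (Eventually.of_forall fun σ => ?_) ?_ (integrable_kernelMajorant hs)
    (ae_of_all _ (tendsto_kernel s))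
  · exact (Measurable.indicator (by fun_prop) measurableSet_Ioo).aestronglyMeasurable
  · filter_upwards [eventually_ge_atTop (4 * s + 4)] with σ hσ
    exact ae_of_all _ (norm_kernel_le_kernelMajorant hs hσ)

end WeightedIntegral

open WeightedIntegral in
/-- Asymptotics of the weighted integrals `∫_𝔻 |z|^t (1-|z|²)^{2s} e^{-1/(1-|z|)} dA(z)`
as `t → ∞`. -/
theorem weighted_integral_asymptotics (s : ℝ) (hs : 0 ≤ s) :
    ∃ L : ℝ, 0 < L ∧ Filter.Tendsto (fun t : ℝ =>
      (∫ z in {z : ℂ | ‖z‖ < 1},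
          ‖z‖ ^ t * (1 - ‖z‖ ^ 2) ^ (2 * s) *
            Real.exp (-1 / (1 - ‖z‖))) /
        ((t + 1) ^ ((-4 * s - 3) / 4) * Real.exp (-2 * Real.sqrt (t + 1))))
      Filter.atTop (nhds L) := by
  refine ⟨2 * π * (4 ^ s * exp (-(1 / 2)) * √π), by positivity, ?_⟩
  have hσ : Tendsto (fun t : ℝ => (t + 1) ^ (1 / 4 : ℝ)) atTop atTop :=
    (tendsto_rpow_atTop (by norm_num)).comp (tendsto_atTop_add_const_right _ 1 tendsto_id)
  refine (((tendsto_integral_kernel hs).comp hσ).const_mul (2 * π)).congr' ?_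
  filter_upwards [eventually_gt_atTop (-1)] with t ht
  exact (integral_div_eq_integral_kernel s ht).symm
end

section
/- Let X be a normed space, Y a Banach space, and T : X → Y a bounded linear map. Suppose for every ε > 0 there is C_ε > 0 and a compact linear map K : X → Z (Z a Banach space, K fixed) such that ‖Tx‖ ≤ ε‖x‖_X + C_ε‖Kx‖_Z for all x ∈ X. Then T is compact. -/
/-!
With `‖T x‖ ≤ (ε / 3) ‖x‖ + C ‖K x‖`, two points of the unit ball whose `K`-images are
`ε / (3 C)`-close have `ε`-close `T`-images. Hence a finite net of the totally bounded set
`K '' ball 0 1` pulls back to a finite `ε`-net of `T '' ball 0 1`, and `Y` is complete.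
-/

open Metric Set

theorem TotallyBounded.image_of_forall_dist_lt {α β γ : Type*} [PseudoMetricSpace β]
    [PseudoMetricSpace γ] {f : α → β} {g : α → γ} {s : Set α} (hg : TotallyBounded (g '' s))
    (hfg : ∀ ε > 0, ∃ δ > 0, ∀ x ∈ s, ∀ y ∈ s, dist (g x) (g y) < δ → dist (f x) (f y) < ε) :
    TotallyBounded (f '' s) := by
  rw [Metric.totallyBounded_iff]
  intro ε hε
  obtain ⟨δ, hδ, hcontrol⟩ := hfg ε hε
  obtain ⟨u, hus, hufin, hcov⟩ :=
    exists_subset_image_finite_and.mp (finite_approx_of_totallyBounded hg δ hδ)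
  refine ⟨f '' u, hufin.image f, ?_⟩
  rintro _ ⟨x, hx, rfl⟩
  obtain ⟨_, ⟨y, hy, rfl⟩, hxy⟩ := mem_iUnion₂.mp (hcov (mem_image_of_mem g hx))
  exact mem_iUnion₂.mpr ⟨f y, mem_image_of_mem f hy, hcontrol x hx y (hus hy) hxy⟩

theorem exists_dist_lt_of_forall_norm_le_add {F G X Y Z : Type*} [SeminormedAddCommGroup X]
    [SeminormedAddCommGroup Y] [SeminormedAddCommGroup Z] [FunLike F X Y] [AddMonoidHomClass F X Y]
    [FunLike G X Z] [AddMonoidHomClass G X Z] (T : F) (K : G)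
    (h : ∀ ε > 0, ∃ C > 0, ∀ x, ‖T x‖ ≤ ε * ‖x‖ + C * ‖K x‖) :
    ∀ ε > 0, ∃ δ > 0, ∀ x ∈ ball (0 : X) 1, ∀ y ∈ ball (0 : X) 1,
      dist (K x) (K y) < δ → dist (T x) (T y) < ε := by
  intro ε hε
  obtain ⟨C, hC, hest⟩ := h (ε / 3) (by positivity)
  refine ⟨ε / (3 * C), by positivity, fun x hx y hy hKxy => ?_⟩
  rw [dist_eq_norm, ← map_sub] at hKxy ⊢
  rw [mem_ball_zero_iff] at hx hy
  have hxy : ‖x - y‖ < 2 := (norm_sub_le x y).trans_lt (by linarith)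
  calc ‖T (x - y)‖ ≤ ε / 3 * ‖x - y‖ + C * ‖K (x - y)‖ := hest _
    _ < ε / 3 * 2 + C * (ε / (3 * C)) := by gcongr
    _ = ε := by field_simp; ring

theorem compact_of_fixed_compactness_estimate_general
    {X Y Z : Type*} [NormedAddCommGroup X] [NormedSpace ℝ X]
    [NormedAddCommGroup Y] [NormedSpace ℝ Y] [CompleteSpace Y]
    [NormedAddCommGroup Z] [NormedSpace ℝ Z]
    (T : X →L[ℝ] Y) (K : X →L[ℝ] Z) (hK : IsCompactOperator K)
    (h : ∀ ε : ℝ, 0 < ε → ∃ C : ℝ, 0 < C ∧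
      ∀ x : X, ‖T x‖ ≤ ε * ‖x‖ + C * ‖K x‖) :
    IsCompactOperator T := by
  have hKball : TotallyBounded (K '' ball 0 1) :=
    (hK.isCompact_closure_image_ball (𝕜₁ := ℝ) 1).totallyBounded.subset subset_closure
  have hTball : TotallyBounded (T '' ball 0 1) :=
    hKball.image_of_forall_dist_lt (exists_dist_lt_of_forall_norm_le_add T K h)
  exact (isCompactOperator_iff_isCompact_closure_image_ball (T : X →ₗ[ℝ] Y) one_pos).mpr
    (hTball.closure.isCompact_of_isClosed isClosed_closure)

/-- Compactness estimate with a single fixed compact operator implies compactness. -/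
theorem compact_of_fixed_compactness_estimate
    {X Y Z : Type*} [NormedAddCommGroup X] [NormedSpace ℝ X]
    [NormedAddCommGroup Y] [NormedSpace ℝ Y] [CompleteSpace Y]
    [NormedAddCommGroup Z] [NormedSpace ℝ Z] [CompleteSpace Z]
    (T : X →L[ℝ] Y) (K : X →L[ℝ] Z) (hK : IsCompactOperator K)
    (h : ∀ ε : ℝ, 0 < ε → ∃ C : ℝ, 0 < C ∧
      ∀ x : X, ‖T x‖ ≤ ε * ‖x‖ + C * ‖K x‖) :
    IsCompactOperator T :=
  compact_of_fixed_compactness_estimate_general T K hK h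
end
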